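/- arXiv:1610.09124 — 3 statements merged into one kernel-verified Lean document; each statement's English description precedes it below -/
import Mathlib

section
/- Let λ and μ be probability measures on ℝ with finite first moments. Then λ ≺ μ in convex order if and only if u_μ(x) ≤ u_λ(x) for all x ∈ ℝ and ∫y λ(dy) = ∫y μ(dy), where u_ν(x) = -∫|y-x| ν(dy). -/
/-!
Since `max z 0 = (z + |z|) / 2` and `|a * y + b| = |a| * |y + b / a|`, equal means together with
`u_μ ≤ u_λ` say that `λ` and `μ` give affine functions the same integral and integrate every
hockey stick `max (a * y + b) 0` in the order `λ ≤ μ`. A convex `c` is the pointwise limit of the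
upper envelopes of its tangent lines (with the right derivative as slope) at the points of finer and
finer grids. Such an envelope is an affine function plus a sum of hockey sticks, and it lies
between a fixed tangent line and `c`, so dominated convergence carries the inequality over to `c`.
Conversely, test the convex order against `|y - x|` and `±y`.
-/

open MeasureTheory Set Filter Topology

noncomputable def tangentLine (c d : ℝ → ℝ) (s y : ℝ) : ℝ := c s + d s * (y - s)

section TangentLine

variable {c d : ℝ → ℝ}

lemma ConvexOn.tangentLine_rightDeriv_le (hc : ConvexOn ℝ univ c) (s y : ℝ) :
    tangentLine c (fun x => derivWithin c (Ioi x) x) s y ≤ c y := by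
  have hint : ∀ x : ℝ, x ∈ interior univ := by simp
  rw [tangentLine]
  rcases lt_trichotomy y s with hys | rfl | hsy
  · have h := (hc.slope_le_leftDeriv_of_mem_interior (mem_univ y) (hint s) hys).trans
      (hc.leftDeriv_le_rightDeriv_of_mem_interior (hint s))
    rw [slope_def_field, div_le_iff₀ (sub_pos.2 hys)] at h
    linarith
  · simp
  · have h := hc.rightDeriv_le_slope_of_mem_interior (hint s) (mem_univ y) hsy
    rw [slope_def_field, le_div_iff₀ (sub_pos.2 hsy)] at h
    linarith

lemma tangentLine_eq_affine (s y : ℝ) : tangentLine c d s y = d s * y + (c s - d s * s) := by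
  unfold tangentLine; ring

lemma tangentLine_sub_tangentLine (s s' y : ℝ) :
    tangentLine c d s' y - tangentLine c d s y
      = (d s' - d s) * y + (c s' - d s' * s' - (c s - d s * s)) := by
  unfold tangentLine; ring

lemma monotone_of_tangentLine_le (hd : ∀ s y, tangentLine c d s y ≤ c y) : Monotone d := by
  intro s s' hss'
  rcases hss'.eq_or_lt with rfl | hlt
  · exact le_rfl
  have h₁ := hd s s'
  have h₂ := hd s' s
  unfold tangentLine at h₁ h₂
  nlinarith

lemma tangentLine_sub_tangentLine_nonneg (hd : ∀ s y, tangentLine c d s y ≤ c y)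
    {s s' y : ℝ} (hss' : s ≤ s') (hy : s' ≤ y) :
    0 ≤ tangentLine c d s' y - tangentLine c d s y := by
  have h₁ := hd s s'
  have h₂ := monotone_of_tangentLine_le hd hss'
  unfold tangentLine at *
  nlinarith [mul_nonneg (sub_nonneg.2 h₂) (sub_nonneg.2 hy)]

lemma tangentLine_sub_tangentLine_nonpos (hd : ∀ s y, tangentLine c d s y ≤ c y)
    {s s' y : ℝ} (hss' : s ≤ s') (hy : y ≤ s) :
    tangentLine c d s' y - tangentLine c d s y ≤ 0 := by
  have h₁ := hd s' s
  have h₂ := monotone_of_tangentLine_le hd hss'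
  unfold tangentLine at *
  nlinarith [mul_nonneg (sub_nonneg.2 h₂) (sub_nonneg.2 hy)]

lemma tendsto_tangentLine_nhdsLE (hd : ∀ s y, tangentLine c d s y ≤ c y) (y : ℝ) :
    Tendsto (fun s => tangentLine c d s y) (𝓝[≤] y) (𝓝 (c y)) := by
  have hlim : Tendsto (fun s => c y - (d y - d (y - 1)) * (y - s)) (𝓝[≤] y) (𝓝 (c y)) := by
    refine tendsto_nhdsWithin_of_tendsto_nhds ?_
    have : Continuous (fun s => c y - (d y - d (y - 1)) * (y - s)) := by fun_prop
    simpa using this.tendsto y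
  refine tendsto_of_tendsto_of_tendsto_of_le_of_le' hlim tendsto_const_nhds ?_
    (Eventually.of_forall fun s => hd s y)
  filter_upwards [Icc_mem_nhdsLE (show y - 1 < y by linarith)] with s hs
  have h₁ := hd y s
  have h₂ := monotone_of_tangentLine_le hd hs.1
  unfold tangentLine at *
  nlinarith [mul_nonneg (sub_nonneg.2 h₂) (sub_nonneg.2 hs.2)]

end TangentLine

/-- For monotone `t` this is the upper envelope `max_{i ≤ N} tangentLine c d (t i)`; the
increments are positive parts of affine functions, which is what the measures can compare. -/
noncomputable def tangentEnvelope (c d : ℝ → ℝ) (t : ℕ → ℝ) : ℕ → ℝ → ℝ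
  | 0, y => tangentLine c d (t 0) y
  | N + 1, y => tangentEnvelope c d t N y +
      max (tangentLine c d (t (N + 1)) y - tangentLine c d (t N) y) 0

section TangentEnvelope

variable {c d : ℝ → ℝ} {t : ℕ → ℝ}

lemma monotone_tangentEnvelope (y : ℝ) : Monotone fun N => tangentEnvelope c d t N y :=
  monotone_nat_of_le_succ fun N => by
    rw [tangentEnvelope]
    linarith [le_max_right (tangentLine c d (t (N + 1)) y - tangentLine c d (t N) y) 0]

lemma tangentLine_le_tangentEnvelope {j N : ℕ} (hj : j ≤ N) (y : ℝ) :
    tangentLine c d (t j) y ≤ tangentEnvelope c d t N y := by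
  refine le_trans ?_ (monotone_tangentEnvelope y hj)
  dsimp only
  induction j with
  | zero => rfl
  | succ j ih =>
    rw [tangentEnvelope]
    linarith [ih (j.le_succ.trans hj),
      le_max_left (tangentLine c d (t (j + 1)) y - tangentLine c d (t j) y) 0]

lemma tangentEnvelope_eq_of_le (hd : ∀ s y, tangentLine c d s y ≤ c y) (ht : Monotone t)
    {N : ℕ} {y : ℝ} (hy : t N ≤ y) : tangentEnvelope c d t N y = tangentLine c d (t N) y := by
  induction N with
  | zero => rfl
  | succ N ih =>
    rw [tangentEnvelope, ih ((ht N.le_succ).trans hy),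
      max_eq_left (tangentLine_sub_tangentLine_nonneg hd (ht N.le_succ) hy)]
    ring

lemma tangentEnvelope_le (hd : ∀ s y, tangentLine c d s y ≤ c y) (ht : Monotone t)
    (N : ℕ) (y : ℝ) : tangentEnvelope c d t N y ≤ c y := by
  induction N with
  | zero => exact hd _ y
  | succ N ih =>
    rw [tangentEnvelope]
    rcases le_or_gt y (t N) with hy | hy
    · rw [max_eq_right (tangentLine_sub_tangentLine_nonpos hd (ht N.le_succ) hy)]
      linarith
    · rw [tangentEnvelope_eq_of_le hd ht hy.le]
      rcases max_cases (tangentLine c d (t (N + 1)) y - tangentLine c d (t N) y) 0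
        with ⟨h, -⟩ | ⟨h, -⟩
      · linarith [hd (t (N + 1)) y]
      · linarith [hd (t N) y]

lemma continuous_tangentEnvelope (N : ℕ) : Continuous (tangentEnvelope c d t N) := by
  have hline (s : ℝ) : Continuous (tangentLine c d s) := by unfold tangentLine; fun_prop
  induction N with
  | zero => exact hline _
  | succ N ih =>
    show Continuous fun y => tangentEnvelope c d t (N + 1) y
    simp only [tangentEnvelope]
    exact ih.add (((hline _).sub (hline _)).max continuous_const)

end TangentEnvelope

section Integrals

variable {c d : ℝ → ℝ} {t : ℕ → ℝ} {ν lam mu : Measure ℝ}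

lemma integrable_affine [IsFiniteMeasure ν] (hν : Integrable id ν) (a b : ℝ) :
    Integrable (fun y => a * y + b) ν :=
  (hν.const_mul a).add (integrable_const b)

lemma integral_affine [IsProbabilityMeasure ν] (hν : Integrable id ν) (a b : ℝ) :
    ∫ y, a * y + b ∂ν = a * ∫ y, y ∂ν + b := by
  rw [integral_add (f := fun y => a * y) (hν.const_mul a) (integrable_const b),
    integral_const_mul]
  simp

lemma integral_max_affine_zero [IsProbabilityMeasure ν] (hν : Integrable id ν) (a b : ℝ) :
    ∫ y, max (a * y + b) 0 ∂ν = (a * ∫ y, y ∂ν + b + ∫ y, |a * y + b| ∂ν) / 2 := by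
  have hmax : ∀ z : ℝ, max z 0 = (z + |z|) / 2 := fun z => by
    rcases le_total 0 z with hz | hz
    · rw [max_eq_left hz, abs_of_nonneg hz]; ring
    · rw [max_eq_right hz, abs_of_nonpos hz]; ring
  have h := integrable_affine hν a b
  simp_rw [hmax]
  rw [integral_div, integral_add h h.abs, integral_affine hν]

lemma integral_abs_affine_le [IsProbabilityMeasure lam] [IsProbabilityMeasure mu]
    (hpot : ∀ x, ∫ y, |y - x| ∂lam ≤ ∫ y, |y - x| ∂mu) (a b : ℝ) :
    ∫ y, |a * y + b| ∂lam ≤ ∫ y, |a * y + b| ∂mu := by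
  rcases eq_or_ne a 0 with rfl | ha
  · simp
  have h : ∀ y, |a * y + b| = |a| * |y - -b / a| := fun y => by
    rw [← abs_mul]; congr 1; field_simp; ring
  simp_rw [h, integral_const_mul]
  exact mul_le_mul_of_nonneg_left (hpot _) (abs_nonneg a)

lemma integral_max_affine_zero_le [IsProbabilityMeasure lam] [IsProbabilityMeasure mu]
    (hlam : Integrable id lam) (hmu : Integrable id mu)
    (hpot : ∀ x, ∫ y, |y - x| ∂lam ≤ ∫ y, |y - x| ∂mu) (hmean : ∫ y, y ∂lam = ∫ y, y ∂mu)
    (a b : ℝ) : ∫ y, max (a * y + b) 0 ∂lam ≤ ∫ y, max (a * y + b) 0 ∂mu := by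
  rw [integral_max_affine_zero hlam, integral_max_affine_zero hmu, hmean]
  linarith [integral_abs_affine_le hpot a b]

lemma integrable_tangentEnvelope [IsFiniteMeasure ν] (hν : Integrable id ν) (N : ℕ) :
    Integrable (tangentEnvelope c d t N) ν := by
  induction N with
  | zero =>
    show Integrable (fun y => tangentEnvelope c d t 0 y) ν
    simp only [tangentEnvelope, tangentLine_eq_affine]
    exact integrable_affine hν _ _
  | succ N ih =>
    show Integrable (fun y => tangentEnvelope c d t (N + 1) y) ν
    simp only [tangentEnvelope, tangentLine_sub_tangentLine]
    exact ih.add (integrable_affine hν _ _).pos_part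

lemma integral_tangentEnvelope_le [IsProbabilityMeasure lam] [IsProbabilityMeasure mu]
    (hlam : Integrable id lam) (hmu : Integrable id mu)
    (hpot : ∀ x, ∫ y, |y - x| ∂lam ≤ ∫ y, |y - x| ∂mu) (hmean : ∫ y, y ∂lam = ∫ y, y ∂mu)
    (N : ℕ) : ∫ y, tangentEnvelope c d t N y ∂lam ≤ ∫ y, tangentEnvelope c d t N y ∂mu := by
  induction N with
  | zero =>
    simp only [tangentEnvelope, tangentLine_eq_affine, integral_affine hlam, integral_affine hmu,
      hmean, le_refl]
  | succ N ih =>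
    simp only [tangentEnvelope, tangentLine_sub_tangentLine]
    rw [integral_add (integrable_tangentEnvelope hlam N) (integrable_affine hlam _ _).pos_part,
      integral_add (integrable_tangentEnvelope hmu N) (integrable_affine hmu _ _).pos_part]
    exact add_le_add ih (integral_max_affine_zero_le hlam hmu hpot hmean _ _)

end Integrals

/-- The points `i ≤ 2 n²` form a grid of mesh `1 / n` on `[-n, n]`. -/
noncomputable def uniformGrid (n i : ℕ) : ℝ := i / n - n

section UniformGrid

lemma monotone_uniformGrid (n : ℕ) : Monotone (uniformGrid n) := fun i j hij => by
  unfold uniformGrid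
  gcongr

lemma uniformGrid_sq (n : ℕ) : uniformGrid n (n ^ 2) = 0 := by
  rcases n.eq_zero_or_pos with rfl | hn
  · simp [uniformGrid]
  · simp [uniformGrid, sq, hn.ne']

lemma uniformGrid_floor_mem_Ioc {n : ℕ} (hn : 0 < n) {y : ℝ} (hy : -n ≤ y) :
    uniformGrid n ⌊(y + n) * n⌋₊ ∈ Ioc (y - 1 / n) y := by
  have hn' : (0 : ℝ) < n := Nat.cast_pos.2 hn
  have h₁ := Nat.floor_le (mul_nonneg (neg_le_iff_add_nonneg.1 hy) hn'.le)
  have h₂ := Nat.lt_floor_add_one ((y + n) * n)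
  constructor
  · rw [uniformGrid, lt_sub_iff_add_lt, lt_div_iff₀ hn']
    have : (y - 1 / n + n) * n = (y + n) * n - 1 := by field_simp; ring
    linarith
  · rw [uniformGrid, sub_le_iff_le_add, div_le_iff₀ hn']
    exact h₁

lemma floor_add_mul_le_two_mul_sq {n : ℕ} {y : ℝ} (hy : y ≤ n) : ⌊(y + n) * n⌋₊ ≤ 2 * n ^ 2 := by
  refine Nat.floor_le_of_le ?_
  push_cast
  nlinarith [(Nat.cast_nonneg n : (0 : ℝ) ≤ n)]

lemma tendsto_uniformGrid_floor (y : ℝ) :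
    Tendsto (fun n : ℕ => uniformGrid n ⌊(y + n) * n⌋₊) atTop (𝓝[≤] y) := by
  have hev : ∀ᶠ n : ℕ in atTop, 0 < n ∧ -(n : ℝ) ≤ y :=
    (eventually_gt_atTop 0).and
      ((tendsto_natCast_atTop_atTop.eventually_ge_atTop (-y)).mono fun n hn => by linarith)
  have hmem : ∀ᶠ n : ℕ in atTop, uniformGrid n ⌊(y + n) * n⌋₊ ∈ Ioc (y - 1 / n) y :=
    hev.mono fun n hn => uniformGrid_floor_mem_Ioc hn.1 hn.2
  have hlow : Tendsto (fun n : ℕ => y - 1 / (n : ℝ)) atTop (𝓝 y) := by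
    simpa using tendsto_const_nhds.sub (tendsto_one_div_atTop_nhds_zero_nat (𝕜 := ℝ))
  refine tendsto_nhdsWithin_iff.2 ⟨?_, hmem.mono fun n hn => hn.2⟩
  exact tendsto_of_tendsto_of_tendsto_of_le_of_le' hlow tendsto_const_nhds
    (hmem.mono fun n hn => hn.1.le) (hmem.mono fun n hn => hn.2)

end UniformGrid

section Approximation

variable {c d : ℝ → ℝ} {ν : Measure ℝ}

lemma tendsto_tangentEnvelope_uniformGrid (hd : ∀ s y, tangentLine c d s y ≤ c y) (y : ℝ) :
    Tendsto (fun n : ℕ => tangentEnvelope c d (uniformGrid n) (2 * n ^ 2) y) atTop (𝓝 (c y)) := by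
  refine tendsto_of_tendsto_of_tendsto_of_le_of_le'
    ((tendsto_tangentLine_nhdsLE hd y).comp (tendsto_uniformGrid_floor y)) tendsto_const_nhds
    ?_ (Eventually.of_forall fun n => tangentEnvelope_le hd (monotone_uniformGrid n) _ y)
  filter_upwards [tendsto_natCast_atTop_atTop.eventually_ge_atTop y] with n hn
  exact tangentLine_le_tangentEnvelope (floor_add_mul_le_two_mul_sq hn) y

lemma tendsto_integral_tangentEnvelope_uniformGrid [IsFiniteMeasure ν]
    (hd : ∀ s y, tangentLine c d s y ≤ c y) (hν : Integrable id ν) (hcν : Integrable c ν) :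
    Tendsto (fun n : ℕ => ∫ y, tangentEnvelope c d (uniformGrid n) (2 * n ^ 2) y ∂ν) atTop
      (𝓝 (∫ y, c y ∂ν)) := by
  refine tendsto_integral_of_dominated_convergence (fun y => |c y| + |tangentLine c d 0 y|)
    (fun n => (continuous_tangentEnvelope _).aestronglyMeasurable) ?_ ?_
    (Eventually.of_forall (tendsto_tangentEnvelope_uniformGrid hd))
  · have hline : Integrable (fun y => tangentLine c d 0 y) ν := by
      simp only [tangentLine_eq_affine]
      exact integrable_affine hν _ _
    exact hcν.abs.add hline.abs
  · refine fun n => Eventually.of_forall fun y => ?_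
    have hlow := tangentLine_le_tangentEnvelope (c := c) (d := d) (t := uniformGrid n)
      (show n ^ 2 ≤ 2 * n ^ 2 by omega) y
    rw [uniformGrid_sq] at hlow
    rw [Real.norm_eq_abs]
    refine (abs_le_max_abs_abs hlow
      (tangentEnvelope_le hd (monotone_uniformGrid n) _ y)).trans ?_
    rw [max_comm]
    exact max_le_add_of_nonneg (abs_nonneg _) (abs_nonneg _)

end Approximation

theorem ConvexOn.integral_le_integral_of_potential_le {c : ℝ → ℝ} {lam mu : Measure ℝ}
    [IsProbabilityMeasure lam] [IsProbabilityMeasure mu] (hc : ConvexOn ℝ univ c)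
    (hlam : Integrable id lam) (hmu : Integrable id mu)
    (hcl : Integrable c lam) (hcm : Integrable c mu)
    (hpot : ∀ x, ∫ y, |y - x| ∂lam ≤ ∫ y, |y - x| ∂mu) (hmean : ∫ y, y ∂lam = ∫ y, y ∂mu) :
    ∫ y, c y ∂lam ≤ ∫ y, c y ∂mu :=
  le_of_tendsto_of_tendsto'
    (tendsto_integral_tangentEnvelope_uniformGrid hc.tangentLine_rightDeriv_le hlam hcl)
    (tendsto_integral_tangentEnvelope_uniformGrid hc.tangentLine_rightDeriv_le hmu hcm)
    fun _ => integral_tangentEnvelope_le hlam hmu hpot hmean _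

/-- for probability measures `λ`, `μ` on `ℝ` with finite first moments,
`λ ≺ μ` in convex order if and only if `u_μ ≤ u_λ` pointwise and the means agree,
where `u_ν(x) = -∫ |y - x| ν(dy)`. -/
theorem convex_order_iff_potential_le_and_mean_eq
    (lam mu : Measure ℝ) [IsProbabilityMeasure lam] [IsProbabilityMeasure mu]
    (hlam : Integrable id lam) (hmu : Integrable id mu) :
    (∀ c : ℝ → ℝ, ConvexOn ℝ Set.univ c →
        Integrable c lam → Integrable c mu →
        ∫ x, c x ∂lam ≤ ∫ x, c x ∂mu)
      ↔ ((∀ x : ℝ, -(∫ y, |y - x| ∂mu) ≤ -(∫ y, |y - x| ∂lam)) ∧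
          ∫ y, y ∂lam = ∫ y, y ∂mu) := by
  refine ⟨fun h => ⟨fun x => ?_, ?_⟩, fun ⟨hpot, hmean⟩ c hc hcl hcm => ?_⟩
  · have hdist := h _ (convexOn_univ_dist x)
      (by simpa [Real.dist_eq] using (hlam.sub (integrable_const x)).abs)
      (by simpa [Real.dist_eq] using (hmu.sub (integrable_const x)).abs)
    simp only [Real.dist_eq] at hdist
    exact neg_le_neg hdist
  · have hid := h id (convexOn_id convex_univ) hlam hmu
    have hneg := h (-id) (concaveOn_id convex_univ).neg hlam.neg hmu.neg
    simp only [Pi.neg_apply, id_eq] at hid hneg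
    rw [integral_neg, integral_neg, neg_le_neg_iff] at hneg
    exact le_antisymm hid hneg
  · exact hc.integral_le_integral_of_potential_le hlam hmu hcl hcm
      (fun x => neg_le_neg_iff.1 (hpot x)) hmean
end

section
/- Pathwise Doob-type inequality: for any continuous path ω on [0,t] starting from s₀ and the martingale increments interpretation, one has the pathwise inequality sup_{s ≤ t} ω(s)² ≤ M_t + 4ω(t)², where M_t is the value of an explicit pathwise trading (stochastic integral) term with M₀ = 0; in the probabilistic form: for every continuous martingale X with X₀ = s₀, E[sup_{s≤t} X_s²] ≤ 4 E[X_t²]. -/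
/-! Sampling `X` on the grid `t k / n`, `k ≤ n`, gives discrete martingales whose running maxima
of `|X|` converge pointwise to the maximum over `[0, t]` by continuity, so by Fatou it suffices to
prove the discrete inequality. There, for `g = max_{k ≤ n} |X_k|` and `f = |X_n|`, Doob's maximal
inequality `s P{s ≤ g} ≤ E[f; s ≤ g]` integrated against `2 s ds` gives
`E g² ≤ 2 E[f g] ≤ E g² / 2 + 2 E f²`, and `E g² < ∞` lets us cancel. -/

open MeasureTheory Set Filter Topology
open scoped ENNReal

namespace MeasureTheory

section LayerCake

variable {α : Type*} [MeasurableSpace α] {μ : Measure α}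

theorem lintegral_sq_eq_two_mul_lintegral_meas_le {g : α → ℝ} (hg : 0 ≤ g) (hgm : Measurable g) :
    ∫⁻ a, ENNReal.ofReal (g a ^ 2) ∂μ
      = 2 * ∫⁻ s in Ioi 0, μ {a | s ≤ g a} * ENNReal.ofReal s := by
  have h := lintegral_rpow_eq_lintegral_meas_le_mul μ (ae_of_all _ hg) hgm.aemeasurable
    two_pos
  norm_num [Real.rpow_two] at h
  exact h

theorem lintegral_Ioi_setLIntegral_le_eq_lintegral_mul [SFinite μ] {F : α → ℝ≥0∞} {g : α → ℝ}
    (hF : Measurable F) (hg : Measurable g) :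
    ∫⁻ s in Ioi 0, ∫⁻ a in {a | s ≤ g a}, F a ∂μ = ∫⁻ a, F a * ENNReal.ofReal (g a) ∂μ := by
  have hmeas : MeasurableSet {p : ℝ × α | p.1 ≤ g p.2} :=
    measurableSet_le measurable_fst (hg.comp measurable_snd)
  calc ∫⁻ s in Ioi 0, ∫⁻ a in {a | s ≤ g a}, F a ∂μ
      = ∫⁻ s in Ioi 0, ∫⁻ a, {p : ℝ × α | p.1 ≤ g p.2}.indicator (F ∘ Prod.snd) (s, a) ∂μ := by
        refine lintegral_congr fun s => ?_
        rw [← lintegral_indicator (measurableSet_le measurable_const hg)]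
        rfl
    _ = ∫⁻ a, (∫⁻ s in Ioi 0, {p : ℝ × α | p.1 ≤ g p.2}.indicator (F ∘ Prod.snd) (s, a)) ∂μ :=
        lintegral_lintegral_swap (f := fun s a => {p : ℝ × α | p.1 ≤ g p.2}.indicator _ (s, a))
          ((hF.comp measurable_snd).indicator hmeas).aemeasurable
    _ = ∫⁻ a, F a * ENNReal.ofReal (g a) ∂μ := by
        refine lintegral_congr fun a => ?_
        have hslice : ∀ s, {p : ℝ × α | p.1 ≤ g p.2}.indicator (F ∘ Prod.snd) (s, a)
            = (Iic (g a)).indicator (fun _ => F a) s := fun s => rfl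
        simp_rw [hslice]
        rw [lintegral_indicator measurableSet_Iic, setLIntegral_const,
          Measure.restrict_apply measurableSet_Iic, Iic_inter_Ioi, Real.volume_Ioc, sub_zero]

theorem four_mul_ofReal_mul_ofReal_le (x y : ℝ) :
    4 * (ENNReal.ofReal x * ENNReal.ofReal y)
      ≤ ENNReal.ofReal (y ^ 2) + 4 * ENNReal.ofReal (x ^ 2) := by
  rcases le_total x 0 with hx | hx
  · simp [ENNReal.ofReal_of_nonpos hx]
  rcases le_total y 0 with hy | hy
  · simp [ENNReal.ofReal_of_nonpos hy]
  have h4 : (4 : ℝ≥0∞) = ENNReal.ofReal 4 := by norm_num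
  rw [h4, ← ENNReal.ofReal_mul hx, ← ENNReal.ofReal_mul (by norm_num),
    ← ENNReal.ofReal_mul (by norm_num), ← ENNReal.ofReal_add (by positivity) (by positivity)]
  exact ENNReal.ofReal_le_ofReal (by nlinarith [sq_nonneg (y - 2 * x)])

theorem lintegral_sq_le_four_mul_lintegral_sq_of_meas_le [SFinite μ] {f g : α → ℝ}
    (hf : Measurable f) (hg_nonneg : 0 ≤ g) (hg : Measurable g)
    (hweak : ∀ s > 0,
      μ {a | s ≤ g a} * ENNReal.ofReal s ≤ ∫⁻ a in {a | s ≤ g a}, ENNReal.ofReal (f a) ∂μ)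
    (hfin : ∫⁻ a, ENNReal.ofReal (g a ^ 2) ∂μ ≠ ∞) :
    ∫⁻ a, ENNReal.ofReal (g a ^ 2) ∂μ ≤ 4 * ∫⁻ a, ENNReal.ofReal (f a ^ 2) ∂μ := by
  refine ENNReal.le_of_add_le_add_left hfin ?_
  calc ∫⁻ a, ENNReal.ofReal (g a ^ 2) ∂μ + ∫⁻ a, ENNReal.ofReal (g a ^ 2) ∂μ
      = 4 * ∫⁻ s in Ioi 0, μ {a | s ≤ g a} * ENNReal.ofReal s := by
        rw [← two_mul, lintegral_sq_eq_two_mul_lintegral_meas_le hg_nonneg hg, ← mul_assoc]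
        norm_num
    _ ≤ 4 * ∫⁻ s in Ioi 0, ∫⁻ a in {a | s ≤ g a}, ENNReal.ofReal (f a) ∂μ := by
        gcongr 4 * ?_
        exact setLIntegral_mono' measurableSet_Ioi hweak
    _ = ∫⁻ a, 4 * (ENNReal.ofReal (f a) * ENNReal.ofReal (g a)) ∂μ := by
        rw [lintegral_Ioi_setLIntegral_le_eq_lintegral_mul hf.ennreal_ofReal hg,
          lintegral_const_mul' _ _ (by norm_num)]
    _ ≤ ∫⁻ a, ENNReal.ofReal (g a ^ 2) + 4 * ENNReal.ofReal (f a ^ 2) ∂μ :=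
        lintegral_mono fun a => four_mul_ofReal_mul_ofReal_le (f a) (g a)
    _ = ∫⁻ a, ENNReal.ofReal (g a ^ 2) ∂μ + 4 * ∫⁻ a, ENNReal.ofReal (f a ^ 2) ∂μ := by
        rw [lintegral_add_left (hg.pow_const 2).ennreal_ofReal, lintegral_const_mul _
          (hf.pow_const 2).ennreal_ofReal]

end LayerCake

section Martingale

variable {Ω ι κ E : Type*} {m0 : MeasurableSpace Ω} {μ : Measure Ω}

def Filtration.comp [Preorder ι] [Preorder κ] (ℱ : Filtration ι m0) {σ : κ → ι}
    (hσ : Monotone σ) : Filtration κ m0 where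
  seq k := ℱ (σ k)
  mono' _ _ hij := ℱ.mono (hσ hij)
  le' k := ℱ.le (σ k)

theorem Martingale.comp_monotone [Preorder ι] [Preorder κ] [NormedAddCommGroup E]
    [NormedSpace ℝ E] [CompleteSpace E] {ℱ : Filtration ι m0} {f : ι → Ω → E}
    (hf : Martingale f ℱ μ) {σ : κ → ι} (hσ : Monotone σ) :
    Martingale (fun k => f (σ k)) (ℱ.comp hσ) μ :=
  ⟨fun k => hf.stronglyAdapted (σ k), fun _ _ hij => hf.condExp_ae_eq (hσ hij)⟩

theorem Martingale.submartingale_abs [Preorder ι] {ℱ : Filtration ι m0} {f : ι → Ω → ℝ}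
    (hf : Martingale f ℱ μ) : Submartingale (fun i ω => |f i ω|) ℱ μ :=
  hf.submartingale.sup hf.neg.submartingale

theorem Submartingale.lintegral_sup'_sq_le [IsFiniteMeasure μ] {𝒢 : Filtration ℕ m0}
    {f : ℕ → Ω → ℝ} (hsub : Submartingale f 𝒢 μ) (hnonneg : 0 ≤ f) (hL2 : ∀ k, MemLp (f k) 2 μ)
    (n : ℕ) :
    ∫⁻ ω, ENNReal.ofReal (((Finset.range (n + 1)).sup' Finset.nonempty_range_add_one
        fun k => f k ω) ^ 2) ∂μ
      ≤ 4 * ∫⁻ ω, ENNReal.ofReal (f n ω ^ 2) ∂μ := by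
  have hfm : ∀ k, Measurable (f k) := fun k => (hsub.stronglyMeasurable k).measurable.le (𝒢.le k)
  have hmax_L2 : MemLp (fun ω => (Finset.range (n + 1)).sup' Finset.nonempty_range_add_one
      fun k => f k ω) 2 μ := by
    simp only [← Finset.sup'_apply]
    exact Finset.sup'_induction (p := fun g => MemLp g 2 μ) _ _ (fun _ h₁ _ h₂ => h₁.sup h₂)
      fun k _ => hL2 k
  refine lintegral_sq_le_four_mul_lintegral_sq_of_meas_le (hfm n)
    (fun ω => (hnonneg 0 ω).trans (Finset.le_sup' (fun k => f k ω)
      (Finset.mem_range.2 n.succ_pos)))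
    (Finset.measurable_range_sup'' fun k _ => hfm k) (fun s hs => ?_) ?_
  · have h := maximal_ineq hsub hnonneg (ε := s.toNNReal) n
    rwa [Real.coe_toNNReal _ hs.le, ofReal_integral_eq_lintegral_ofReal
      (hsub.integrable n).integrableOn (ae_of_all _ fun ω => hnonneg n ω), mul_comm] at h
  · exact ((memLp_two_iff_integrable_sq hmax_L2.1).1 hmax_L2).lintegral_lt_top.ne

end Martingale

end MeasureTheory

/-- The grid `t k / n`, frozen at `t` for `k ≥ n` so that sampling a martingale along it gives a
martingale indexed by all of `ℕ`. -/
noncomputable def gridTime (t : ℝ) (n k : ℕ) : ℝ := t * (min k n : ℕ) / n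

section GridTime

variable {t : ℝ}

theorem monotone_gridTime (ht : 0 ≤ t) (n : ℕ) : Monotone (gridTime t n) := fun k l hkl => by
  unfold gridTime
  gcongr

theorem gridTime_mem_Icc (ht : 0 ≤ t) (n k : ℕ) : gridTime t n k ∈ Icc 0 t := by
  unfold gridTime
  refine ⟨by positivity, div_le_of_le_mul₀ n.cast_nonneg ht ?_⟩
  gcongr
  exact_mod_cast min_le_right k n

theorem gridTime_self {n : ℕ} (hn : n ≠ 0) : gridTime t n n = t := by
  simp [gridTime, hn]

theorem floor_mul_div_le {s : ℝ} (hs : s ∈ Icc 0 t) (n : ℕ) : ⌊n * s / t⌋₊ ≤ n :=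
  Nat.floor_le_of_le (div_le_of_le_mul₀ (hs.1.trans hs.2) n.cast_nonneg
    (mul_le_mul_of_nonneg_left hs.2 n.cast_nonneg))

theorem tendsto_gridTime_floor {s : ℝ} (hs : s ∈ Icc 0 t) :
    Tendsto (fun n : ℕ => gridTime t n ⌊n * s / t⌋₊) atTop (𝓝 s) := by
  rcases (hs.1.trans hs.2).eq_or_lt with rfl | ht
  · simp [gridTime, le_antisymm hs.2 hs.1]
  have hbounds : ∀ n : ℕ, 0 < n →
      s - t / n ≤ gridTime t n ⌊n * s / t⌋₊ ∧ gridTime t n ⌊n * s / t⌋₊ ≤ s := by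
    intro n hn
    have hn' : (0 : ℝ) < n := Nat.cast_pos.2 hn
    have hx : 0 ≤ n * s / t := by have := hs.1; positivity
    have h₁ := Nat.floor_le hx
    have h₂ := Nat.lt_floor_add_one (n * s / t)
    rw [gridTime, min_eq_left (floor_mul_div_le hs n)]
    rw [le_div_iff₀ ht] at h₁
    rw [div_lt_iff₀ ht] at h₂
    constructor
    · rw [le_div_iff₀ hn', sub_mul, div_mul_cancel₀ _ hn'.ne']
      nlinarith
    · rw [div_le_iff₀ hn']
      nlinarith
  refine tendsto_of_tendsto_of_tendsto_of_le_of_le' ?_ tendsto_const_nhds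
    ((eventually_gt_atTop 0).mono fun n hn => (hbounds n hn).1)
    ((eventually_gt_atTop 0).mono fun n hn => (hbounds n hn).2)
  simpa using tendsto_const_nhds.sub (tendsto_const_div_atTop_nhds_zero_nat t)

theorem tendsto_sup'_gridTime {h : ℝ → ℝ} (hh : ContinuousOn h (Icc 0 t)) (ht : 0 ≤ t) :
    Tendsto (fun n : ℕ => (Finset.range (n + 1)).sup' Finset.nonempty_range_add_one
      fun k => h (gridTime t n k)) atTop (𝓝 (sSup (h '' Icc 0 t))) := by
  have hK := isCompact_Icc.image_of_continuousOn hh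
  obtain ⟨s, hs, hs_max⟩ := hK.sSup_mem ((nonempty_Icc.2 ht).image h)
  have hgrid : Tendsto (fun n : ℕ => gridTime t n ⌊n * s / t⌋₊) atTop (𝓝[Icc 0 t] s) :=
    tendsto_nhdsWithin_iff.2
      ⟨tendsto_gridTime_floor hs, Eventually.of_forall fun n => gridTime_mem_Icc ht n _⟩
  refine tendsto_of_tendsto_of_tendsto_of_le_of_le (hs_max ▸ (hh s hs).tendsto.comp hgrid)
    tendsto_const_nhds (fun n => ?_) (fun n => ?_)
  · exact Finset.le_sup' (fun k => h (gridTime t n k))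
      (Finset.mem_range.2 (Nat.lt_succ_of_le (floor_mul_div_le hs n)))
  · exact Finset.sup'_le _ _ fun k _ =>
      le_csSup hK.bddAbove (mem_image_of_mem h (gridTime_mem_Icc ht n k))

end GridTime

/-- Doob's L² maximal inequality for a continuous martingale:
`E[sup_{s ≤ t} X_s²] ≤ 4 E[X_t²]`. (Stated with the lower Lebesgue integral so that
no integrability of the maximum needs to be pre-supposed.) -/
theorem doob_L2_maximal_continuous_martingale
    {Ω : Type*} [MeasurableSpace Ω] (P : Measure Ω) [IsProbabilityMeasure P]
    (ℱ : Filtration ℝ (by infer_instance : MeasurableSpace Ω))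
    (X : ℝ → Ω → ℝ)
    (hmart : Martingale X ℱ P)
    (hcont : ∀ ω, Continuous fun s => X s ω)
    (hL2 : ∀ s : ℝ, MemLp (X s) 2 P)
    (t : ℝ) (ht : 0 ≤ t) :
    ∫⁻ ω, ENNReal.ofReal ((sSup ((fun s => |X s ω|) '' Set.Icc 0 t)) ^ 2) ∂P
      ≤ 4 * ∫⁻ ω, ENNReal.ofReal ((X t ω) ^ 2) ∂P := by
  set G : ℕ → Ω → ℝ := fun n ω => (Finset.range (n + 1)).sup' Finset.nonempty_range_add_one
    fun k => |X (gridTime t n k) ω|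
  have hG_meas : ∀ n, Measurable (G n) := fun n => Finset.measurable_range_sup'' fun k _ =>
    ((hmart.stronglyMeasurable _).measurable.le (ℱ.le _)).abs
  have hG_tendsto : ∀ ω, Tendsto (fun n => ENNReal.ofReal (G n ω ^ 2)) atTop
      (𝓝 (ENNReal.ofReal (sSup ((fun s => |X s ω|) '' Icc 0 t) ^ 2))) := fun ω =>
    (ENNReal.continuous_ofReal.tendsto _).comp
      ((tendsto_sup'_gridTime (hcont ω).abs.continuousOn ht).pow 2)
  have hG_le : ∀ n, 0 < n →
      ∫⁻ ω, ENNReal.ofReal (G n ω ^ 2) ∂P ≤ 4 * ∫⁻ ω, ENNReal.ofReal (X t ω ^ 2) ∂P := by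
    intro n hn
    have h := (hmart.comp_monotone (monotone_gridTime ht n)).submartingale_abs.lintegral_sup'_sq_le
      (fun _ _ => abs_nonneg _) (fun k => (hL2 _).abs) n
    simpa only [gridTime_self hn.ne', sq_abs] using h
  calc ∫⁻ ω, ENNReal.ofReal ((sSup ((fun s => |X s ω|) '' Set.Icc 0 t)) ^ 2) ∂P
      = ∫⁻ ω, liminf (fun n => ENNReal.ofReal (G n ω ^ 2)) atTop ∂P :=
        lintegral_congr fun ω => (hG_tendsto ω).liminf_eq.symm
    _ ≤ liminf (fun n => ∫⁻ ω, ENNReal.ofReal (G n ω ^ 2) ∂P) atTop :=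
        lintegral_liminf_le fun n => ((hG_meas n).pow_const 2).ennreal_ofReal
    _ ≤ 4 * ∫⁻ ω, ENNReal.ofReal ((X t ω) ^ 2) ∂P :=
        liminf_le_of_frequently_le' ((eventually_gt_atTop 0).mono hG_le).frequently
end

section
/- For the minimization of E[F(τ)] over stopping times τ ≥ σ embedding μ (F convex increasing), the stop-go pairs are characterized as: for stopped paths (f,s), (g,t) with f(s) = g(t) and (g,t) feasible, the pair ((f,s),(g,t)) is a stop-go pair (for the minimization) if and only if (f,s) is feasible and s > t. Equivalently: for every integrable stopping time σ with 0 < E[σ] < ∞, if s > t then E[F(s + σ)] + F(t) > F(s) + E[F(t + σ)]. -/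
/-!
Strict convexity makes the increments `x ↦ F (x + u) - F x` strictly increasing for `u > 0`.
Hence `(F (s + σ) - F s) - (F (t + σ) - F t)` is nonnegative and vanishes only where `σ = 0`;
since `E[σ] > 0`, the set `{σ ≠ 0}` has positive probability, so this gap has positive expectation.
-/

open MeasureTheory Set

theorem StrictConvexOn.sub_lt_sub_of_lt_of_pos {𝕜 : Type*} [Field 𝕜] [LinearOrder 𝕜]
    [IsStrictOrderedRing 𝕜] {D : Set 𝕜} {f : 𝕜 → 𝕜} (hf : StrictConvexOn 𝕜 D f) {x y u : 𝕜}
    (hx : x ∈ D) (hyu : y + u ∈ D) (hxy : x < y) (hu : 0 < u) :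
    f (x + u) - f x < f (y + u) - f y := by
  have h₁ := hf.secant_strict_mono_aux2 hx hyu (lt_add_of_pos_right x hu) (by linarith)
  have h₂ := hf.secant_strict_mono_aux3 hx hyu hxy (lt_add_of_pos_right y hu)
  rw [add_sub_cancel_left] at h₁
  rw [add_sub_cancel_left] at h₂
  exact (div_lt_div_iff_of_pos_right hu).mp (h₁.trans h₂)

theorem MeasureTheory.integral_pos_of_support_subset {α : Type*} [MeasurableSpace α]
    {μ : Measure α} {f g : α → ℝ} (hf : 0 ≤ f) (hg : 0 ≤ g) (hgi : Integrable g μ)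
    (hfg : Function.support f ⊆ Function.support g) (hfpos : 0 < ∫ a, f a ∂μ) :
    0 < ∫ a, g a ∂μ := by
  have hfi : Integrable f μ := Integrable.of_integral_ne_zero hfpos.ne'
  rw [integral_pos_iff_support_of_nonneg hf hfi] at hfpos
  rw [integral_pos_iff_support_of_nonneg hg hgi]
  exact hfpos.trans_le (measure_mono hfg)

theorem stop_go_strict_convex_general
    {Ω : Type*} [MeasurableSpace Ω] (P : Measure Ω) [IsProbabilityMeasure P]
    (F : ℝ → ℝ) (hF : StrictConvexOn ℝ (Set.Ici (0 : ℝ)) F)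
    (s t : ℝ) (hts : t < s) (ht : 0 ≤ t)
    (σ : Ω → ℝ) (hσ0 : ∀ ω, 0 ≤ σ ω)
    (hσpos : 0 < ∫ ω, σ ω ∂P)
    (hFs : Integrable (fun ω => F (s + σ ω)) P)
    (hFt : Integrable (fun ω => F (t + σ ω)) P) :
    (∫ ω, F (t + σ ω) ∂P) - F t < (∫ ω, F (s + σ ω) ∂P) - F s := by
  set gap : Ω → ℝ := fun ω => (F (s + σ ω) - F s) - (F (t + σ ω) - F t)
  have increment_lt {ω} (hω : 0 < σ ω) : F (t + σ ω) - F t < F (s + σ ω) - F s :=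
    hF.sub_lt_sub_of_lt_of_pos (mem_Ici.2 ht) (mem_Ici.2 (by linarith [hσ0 ω])) hts hω
  have gap_nonneg : 0 ≤ gap := fun ω => by
    rcases (hσ0 ω).eq_or_lt with hω | hω
    · simp [gap, ← hω]
    · exact sub_nonneg.2 (increment_lt hω).le
  have support_subset : Function.support σ ⊆ Function.support gap := fun ω hω =>
    (sub_pos.2 (increment_lt ((hσ0 ω).lt_of_ne' hω))).ne'
  have hs_increment : Integrable (fun ω => F (s + σ ω) - F s) P := hFs.sub (integrable_const _)
  have ht_increment : Integrable (fun ω => F (t + σ ω) - F t) P := hFt.sub (integrable_const _)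
  have integral_gap : ∫ ω, gap ω ∂P
      = (∫ ω, F (s + σ ω) ∂P - F s) - (∫ ω, F (t + σ ω) ∂P - F t) := by
    rw [integral_sub hs_increment ht_increment, integral_sub hFs (integrable_const _),
      integral_sub hFt (integrable_const _)]
    simp
  have gap_pos := integral_pos_of_support_subset hσ0 gap_nonneg (hs_increment.sub ht_increment)
    support_subset hσpos
  linarith

/-- core stop-go inequality: if `F : ℝ₊ → ℝ` is strictly convex and
`s > t ≥ 0`, then for every nonnegative random variable `σ` with `0 < E[σ] < ∞`
(and all relevant expectations finite),
`E[F(s+σ)] - F(s) > E[F(t+σ)] - F(t)`. -/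
theorem stop_go_strict_convex
    {Ω : Type*} [MeasurableSpace Ω] (P : Measure Ω) [IsProbabilityMeasure P]
    (F : ℝ → ℝ) (hF : StrictConvexOn ℝ (Set.Ici (0 : ℝ)) F)
    (s t : ℝ) (hts : t < s) (ht : 0 ≤ t)
    (σ : Ω → ℝ) (hσ0 : ∀ ω, 0 ≤ σ ω)
    (hσint : Integrable σ P) (hσpos : 0 < ∫ ω, σ ω ∂P)
    (hFs : Integrable (fun ω => F (s + σ ω)) P)
    (hFt : Integrable (fun ω => F (t + σ ω)) P) :
    (∫ ω, F (t + σ ω) ∂P) - F t < (∫ ω, F (s + σ ω) ∂P) - F s :=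
  stop_go_strict_convex_general P F hF s t hts ht σ hσ0 hσpos hFs hFt
end
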